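/- arXiv:2006.04500 — 4 statements merged into one kernel-verified Lean document; each statement's English description precedes it below -/
import Mathlib

section
/- For all positive integers n_1,...,n_k (with k ≥ 3, 1 ≤ s ≤ k-1), ϑ_{k,s}(n_1,...,n_k) = Σ_{d_1|n_1} ⋯ Σ_{d_k|n_k} λ_{k,s}(d_1,...,d_k); that is, the indicator function of gcd(n_1⋯n_s, n_{s+1}⋯n_k) = 1 is the Dirichlet convolution of the constant-1 function of k variables with λ_{k,s}. -/
/-- ϑ_{k,s}: indicator of gcd(n_1⋯n_s, n_{s+1}⋯n_k) = 1. -/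
def theta (k s : ℕ) (x : Fin k → ℕ) : ℕ :=
  if Nat.Coprime (∏ i ∈ Finset.univ.filter (fun i : Fin k => (i : ℕ) < s), x i)
      (∏ i ∈ Finset.univ.filter (fun i : Fin k => s ≤ (i : ℕ)), x i) then 1 else 0

/-- Local values of λ_{k,s} on prime powers p^{ν_1},...,p^{ν_k}. -/
def lamLocal (k s : ℕ) (ν : Fin k → ℕ) : ℤ :=
  if ∀ i, ν i = 0 then 1
  else if (∀ i, ν i ≤ 1) ∧ (1 ≤ ∑ i ∈ Finset.univ.filter (fun i : Fin k => (i : ℕ) < s), ν i)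
      ∧ (1 ≤ ∑ i ∈ Finset.univ.filter (fun i : Fin k => s ≤ (i : ℕ)), ν i) then
    (-1) ^ (∑ i, ν i - 1)
  else 0

/-- The multiplicative function λ_{k,s} of k variables, built from its local values. -/
def lam (k s : ℕ) (x : Fin k → ℕ) : ℤ :=
  ∏ p ∈ (∏ i, x i).primeFactors, lamLocal k s (fun i => (x i).factorization p)

open Finset


private lemma prod_pow_factorization_eq {P : Finset ℕ} {d : ℕ} (hd : d ≠ 0)
    (hsub : d.primeFactors ⊆ P) : ∏ p ∈ P, p ^ d.factorization p = d := by
  have h1 : ∏ p ∈ d.primeFactors, p ^ d.factorization p = d := by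
    conv_rhs => rw [← Nat.factorization_prod_pow_eq_self hd]
    rw [Finsupp.prod, Nat.support_factorization]
  refine Eq.trans ?_ h1
  refine (Finset.prod_subset (f := fun p => p ^ d.factorization p) hsub ?_).symm
  intro p _ hp
  have h0 : d.factorization p = 0 :=
    Finsupp.notMem_support_iff.mp (by rwa [Nat.support_factorization])
  simp only [h0, pow_zero]

private lemma factorization_prod_pow {P : Finset ℕ} (hP : ∀ p ∈ P, Nat.Prime p)
    (g : ℕ → ℕ) {q : ℕ} (hq : q ∈ P) :
    (∏ p ∈ P, p ^ g p).factorization q = g q := by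
  rw [Nat.factorization_prod (fun p hp => pow_ne_zero _ (hP p hp).pos.ne')]
  rw [Finset.sum_apply']
  rw [Finset.sum_congr rfl (fun p hp => by
    rw [(hP p hp).factorization_pow, Finsupp.single_apply])]
  rw [Finset.sum_ite_eq', if_pos hq]


private lemma key_powerset {ι : Type*} [DecidableEq ι] (L R : Finset ι) (hd : Disjoint L R) :
    (∑ S ∈ (L ∪ R).powerset,
      (if S = ∅ then (1:ℤ) else
        if (S ∩ L).Nonempty ∧ (S ∩ R).Nonempty then (-1)^(S.card - 1) else 0))
    = if L.Nonempty ∧ R.Nonempty then 0 else 1 := by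
  have hsplit : ∀ S ∈ (L ∪ R).powerset,
      (if S = ∅ then (1:ℤ) else
        if (S ∩ L).Nonempty ∧ (S ∩ R).Nonempty then (-1)^(S.card - 1) else 0)
      = ((if S = ∅ then (1:ℤ) else 0) - (-1)^S.card + (if S ⊆ L then (-1:ℤ)^S.card else 0)
        + (if S ⊆ R then (-1:ℤ)^S.card else 0)) - (if S = ∅ then (-1:ℤ)^S.card else 0) := by
    intro S hS
    rw [mem_powerset] at hS
    by_cases h0 : S = ∅
    · simp [h0]
    · have hc : S.card ≠ 0 := fun h => h0 (card_eq_zero.mp h)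
      have hSne : S.Nonempty := nonempty_iff_ne_empty.mpr h0
      by_cases hL : (S ∩ L).Nonempty
      · by_cases hR : (S ∩ R).Nonempty
        · have h1 : ¬ S ⊆ L := by
            intro h
            obtain ⟨x, hx⟩ := hR
            rw [mem_inter] at hx
            exact (Finset.disjoint_left.mp hd (h hx.1) hx.2)
          have h2 : ¬ S ⊆ R := by
            intro h
            obtain ⟨x, hx⟩ := hL
            rw [mem_inter] at hx
            exact (Finset.disjoint_left.mp hd hx.2 (h hx.1))
          rw [if_neg h0, if_pos ⟨hL, hR⟩, if_neg h0, if_neg h1, if_neg h2, if_neg h0]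
          have h3 : S.card - 1 + 1 = S.card := Nat.succ_pred_eq_of_ne_zero hc
          have hpow : ((-1:ℤ))^S.card = -(-1)^(S.card-1) := by
            conv_lhs => rw [← h3]
            rw [pow_succ]; ring
          rw [hpow]; ring
        · -- S ∩ R = ∅, so S ⊆ L, S nonempty
          have hSL : S ⊆ L := by
            intro x hx
            rcases Finset.mem_union.mp (hS hx) with h | h
            · exact h
            · exact absurd ⟨x, mem_inter.mpr ⟨hx, h⟩⟩ hR
          have h2 : ¬ S ⊆ R := by
            intro h
            obtain ⟨x, hx⟩ := hSne
            exact absurd ⟨x, mem_inter.mpr ⟨hx, h hx⟩⟩ hR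
          rw [if_neg h0, if_neg (by tauto), if_neg h0, if_pos hSL, if_neg h2, if_neg h0]
          ring
      · have hSR : S ⊆ R := by
          intro x hx
          rcases Finset.mem_union.mp (hS hx) with h | h
          · exact absurd ⟨x, mem_inter.mpr ⟨hx, h⟩⟩ hL
          · exact h
        have h1 : ¬ S ⊆ L := by
          intro h
          obtain ⟨x, hx⟩ := hSne
          exact absurd ⟨x, mem_inter.mpr ⟨hx, h hx⟩⟩ hL
        rw [if_neg h0, if_neg (by tauto), if_neg h0, if_neg h1, if_pos hSR, if_neg h0]
        ring
  rw [Finset.sum_congr rfl hsplit]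
  rw [Finset.sum_sub_distrib, Finset.sum_add_distrib, Finset.sum_add_distrib,
    Finset.sum_sub_distrib]
  have e1 : ∑ S ∈ (L ∪ R).powerset, (if S = ∅ then (1:ℤ) else 0) = 1 := by
    rw [Finset.sum_ite_eq' (L ∪ R).powerset ∅ (fun _ => (1:ℤ)),
      if_pos (Finset.empty_mem_powerset _)]
  have e2 : ∑ S ∈ (L ∪ R).powerset, ((-1:ℤ))^S.card = if L ∪ R = ∅ then 1 else 0 :=
    Finset.sum_powerset_neg_one_pow_card
  have eL : ∑ S ∈ (L ∪ R).powerset, (if S ⊆ L then (-1:ℤ)^S.card else 0)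
      = if L = ∅ then 1 else 0 := by
    rw [← Finset.sum_filter]
    have : (L ∪ R).powerset.filter (fun S => S ⊆ L) = L.powerset := by
      ext S
      simp only [mem_filter, mem_powerset]
      exact ⟨fun h => h.2, fun h => ⟨h.trans subset_union_left, h⟩⟩
    rw [this]
    exact Finset.sum_powerset_neg_one_pow_card
  have eR : ∑ S ∈ (L ∪ R).powerset, (if S ⊆ R then (-1:ℤ)^S.card else 0)
      = if R = ∅ then 1 else 0 := by
    rw [← Finset.sum_filter]
    have : (L ∪ R).powerset.filter (fun S => S ⊆ R) = R.powerset := by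
      ext S
      simp only [mem_filter, mem_powerset]
      exact ⟨fun h => h.2, fun h => ⟨h.trans subset_union_right, h⟩⟩
    rw [this]
    exact Finset.sum_powerset_neg_one_pow_card
  have e3 : ∑ S ∈ (L ∪ R).powerset, (if S = ∅ then ((-1:ℤ))^S.card else 0) = 1 := by
    rw [Finset.sum_ite_eq' (L ∪ R).powerset ∅ (fun S => ((-1:ℤ))^S.card),
      if_pos (Finset.empty_mem_powerset _)]
    simp
  rw [e1, e2, eL, eR, e3]
  by_cases hL : L = ∅ <;> by_cases hR : R = ∅ <;>
    simp [hL, hR, Finset.union_eq_empty, Finset.nonempty_iff_ne_empty]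

private lemma local_sum (k s : ℕ) (e : Fin k → ℕ) :
    (∑ ν ∈ Fintype.piFinset (fun i => Finset.range (e i + 1)), lamLocal k s ν)
    = if (∃ i : Fin k, (i:ℕ) < s ∧ 1 ≤ e i) ∧ (∃ i : Fin k, s ≤ (i:ℕ) ∧ 1 ≤ e i)
      then 0 else 1 := by
  classical
  set L : Finset (Fin k) := univ.filter (fun i => (i:ℕ) < s) with hLdef
  set R : Finset (Fin k) := univ.filter (fun i => s ≤ (i:ℕ)) with hRdef
  set E : Finset (Fin k) := univ.filter (fun i => 1 ≤ e i) with hEdef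
  set EL : Finset (Fin k) := univ.filter (fun i => 1 ≤ e i ∧ (i:ℕ) < s) with hELdef
  set ER : Finset (Fin k) := univ.filter (fun i => 1 ≤ e i ∧ s ≤ (i:ℕ)) with hERdef
  have hsub : Fintype.piFinset (fun i => Finset.range (min (e i) 1 + 1))
      ⊆ Fintype.piFinset (fun i => Finset.range (e i + 1)) := by
    intro ν h
    rw [Fintype.mem_piFinset] at h ⊢
    intro i
    have := h i
    rw [Finset.mem_range] at this ⊢
    have := min_le_left (e i) 1
    omega
  have hvan : ∀ ν ∈ Fintype.piFinset (fun i => Finset.range (e i + 1)),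
      ν ∉ Fintype.piFinset (fun i => Finset.range (min (e i) 1 + 1)) → lamLocal k s ν = 0 := by
    intro ν hb hs'
    rw [Fintype.mem_piFinset] at hb
    rw [Fintype.mem_piFinset] at hs'
    push_neg at hs'
    obtain ⟨i, hi⟩ := hs'
    have h1 := hb i
    rw [Finset.mem_range] at h1
    rw [Finset.mem_range, not_lt] at hi
    have h2 : 2 ≤ ν i := by
      rcases Nat.eq_zero_or_pos (e i) with h | h
      · have hm : min (e i) 1 ≤ e i := min_le_left _ _
        omega
      · have hm : min (e i) 1 = 1 := min_eq_right h
        omega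
    unfold lamLocal
    rw [if_neg (fun h => by have := h i; omega),
        if_neg (fun h => by have := h.1 i; omega)]
  rw [← Finset.sum_subset hsub hvan]
  have hbij : (∑ ν ∈ Fintype.piFinset (fun i => Finset.range (min (e i) 1 + 1)),
        lamLocal k s ν)
      = ∑ S ∈ E.powerset, (if S = ∅ then (1:ℤ) else
          if (S ∩ L).Nonempty ∧ (S ∩ R).Nonempty then (-1)^(S.card - 1) else 0) := by
    refine Finset.sum_nbij' (fun ν => univ.filter (fun i => ν i = 1))
      (fun S i => if i ∈ S then 1 else 0) ?_ ?_ ?_ ?_ ?_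
    · intro ν hν
      rw [Fintype.mem_piFinset] at hν
      rw [mem_powerset]
      intro i hi
      rw [mem_filter] at hi ⊢
      have := hν i
      rw [Finset.mem_range] at this
      refine ⟨mem_univ _, ?_⟩
      have := min_le_left (e i) 1
      have := min_le_right (e i) 1
      rcases Nat.eq_zero_or_pos (e i) with h | h
      · exfalso
        have hm : min (e i) 1 ≤ e i := min_le_left _ _
        omega
      · exact h
    · intro S hS
      rw [mem_powerset] at hS
      rw [Fintype.mem_piFinset]
      intro i
      rw [Finset.mem_range, Nat.lt_succ_iff]
      by_cases h : i ∈ S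
      · have := hS h
        rw [hEdef, mem_filter] at this
        simp only [h, if_true]
        exact Nat.le_min.mpr ⟨this.2, le_refl 1⟩
      · simp [h]
    · intro ν hν
      rw [Fintype.mem_piFinset] at hν
      funext i
      have := hν i
      rw [Finset.mem_range, Nat.lt_succ_iff] at this
      have h1 : ν i ≤ 1 := this.trans (min_le_right _ _)
      by_cases h : ν i = 1 <;> simp [h] <;> omega
    · intro S hS
      ext i
      simp
    · intro ν hν
      rw [Fintype.mem_piFinset] at hν
      have hν1 : ∀ i, ν i ≤ 1 := fun i => by
        have := hν i
        rw [Finset.mem_range, Nat.lt_succ_iff] at this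
        exact this.trans (min_le_right _ _)
      set S : Finset (Fin k) := univ.filter (fun i => ν i = 1) with hSdef
      have hS0 : S = ∅ ↔ ∀ i, ν i = 0 := by
        rw [hSdef, Finset.filter_eq_empty_iff]
        constructor
        · intro h i
          have := h (mem_univ i)
          have := hν1 i
          omega
        · intro h i _
          have := h i
          omega
      have hcard : S.card = ∑ i, ν i := by
        rw [hSdef, Finset.card_filter]
        refine Finset.sum_congr rfl (fun i _ => ?_)
        have := hν1 i
        by_cases h : ν i = 1 <;> simp [h] <;> omega
      have hsumL : (S ∩ L).Nonempty ↔ 1 ≤ ∑ i ∈ L, ν i := by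
        rw [Nat.one_le_iff_ne_zero, Ne, Finset.sum_eq_zero_iff]
        constructor
        · rintro ⟨i, hi⟩ h
          rw [mem_inter, hSdef, mem_filter] at hi
          have := h i hi.2
          omega
        · intro h
          push_neg at h
          obtain ⟨i, hiL, hi⟩ := h
          exact ⟨i, mem_inter.mpr ⟨by rw [hSdef, mem_filter]; exact ⟨mem_univ _, by have := hν1 i; omega⟩, hiL⟩⟩
      have hsumR : (S ∩ R).Nonempty ↔ 1 ≤ ∑ i ∈ R, ν i := by
        rw [Nat.one_le_iff_ne_zero, Ne, Finset.sum_eq_zero_iff]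
        constructor
        · rintro ⟨i, hi⟩ h
          rw [mem_inter, hSdef, mem_filter] at hi
          have := h i hi.2
          omega
        · intro h
          push_neg at h
          obtain ⟨i, hiR, hi⟩ := h
          exact ⟨i, mem_inter.mpr ⟨by rw [hSdef, mem_filter]; exact ⟨mem_univ _, by have := hν1 i; omega⟩, hiR⟩⟩
      by_cases hall : ∀ i, ν i = 0
      · rw [lamLocal, if_pos hall, if_pos (hS0.mpr hall)]
      · rw [lamLocal, if_neg hall, if_neg (fun h => hall (hS0.mp h))]
        by_cases hcond : (1 ≤ ∑ i ∈ L, ν i) ∧ (1 ≤ ∑ i ∈ R, ν i)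
        · rw [if_pos ⟨hν1, hcond.1, hcond.2⟩, if_pos ⟨hsumL.mpr hcond.1, hsumR.mpr hcond.2⟩,
            hcard]
        · rw [if_neg (fun h => hcond ⟨h.2.1, h.2.2⟩),
            if_neg (fun h => hcond ⟨hsumL.mp h.1, hsumR.mp h.2⟩)]
  rw [hbij]
  have hunion : EL ∪ ER = E := by
    ext i
    rw [mem_union, hELdef, hERdef, hEdef, mem_filter, mem_filter, mem_filter]
    constructor
    · rintro (h | h) <;> exact ⟨h.1, h.2.1⟩
    · intro h
      rcases Nat.lt_or_ge (i : ℕ) s with hc | hc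
      · exact Or.inl ⟨h.1, h.2, hc⟩
      · exact Or.inr ⟨h.1, h.2, hc⟩
  have hdisj : Disjoint EL ER := by
    rw [Finset.disjoint_left]
    intro i hi1 hi2
    rw [hELdef, mem_filter] at hi1
    rw [hERdef, mem_filter] at hi2
    omega
  have hcongr : ∀ S ∈ (EL ∪ ER).powerset,
      (if S = ∅ then (1:ℤ) else
        if (S ∩ L).Nonempty ∧ (S ∩ R).Nonempty then (-1)^(S.card - 1) else 0)
      = (if S = ∅ then (1:ℤ) else
        if (S ∩ EL).Nonempty ∧ (S ∩ ER).Nonempty then (-1)^(S.card - 1) else 0) := by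
    intro S hS
    rw [mem_powerset, hunion] at hS
    have h1 : (S ∩ L).Nonempty ↔ (S ∩ EL).Nonempty := by
      constructor
      · rintro ⟨x, hx⟩
        rw [mem_inter] at hx
        have hxE := hS hx.1
        rw [hEdef, mem_filter] at hxE
        rw [hLdef, mem_filter] at hx
        exact ⟨x, mem_inter.mpr ⟨hx.1, by rw [hELdef, mem_filter]; exact ⟨mem_univ _, hxE.2, hx.2.2⟩⟩⟩
      · rintro ⟨x, hx⟩
        rw [mem_inter, hELdef, mem_filter] at hx
        exact ⟨x, mem_inter.mpr ⟨hx.1, by rw [hLdef, mem_filter]; exact ⟨mem_univ _, hx.2.2.2⟩⟩⟩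
    have h2 : (S ∩ R).Nonempty ↔ (S ∩ ER).Nonempty := by
      constructor
      · rintro ⟨x, hx⟩
        rw [mem_inter] at hx
        have hxE := hS hx.1
        rw [hEdef, mem_filter] at hxE
        rw [hRdef, mem_filter] at hx
        exact ⟨x, mem_inter.mpr ⟨hx.1, by rw [hERdef, mem_filter]; exact ⟨mem_univ _, hxE.2, hx.2.2⟩⟩⟩
      · rintro ⟨x, hx⟩
        rw [mem_inter, hERdef, mem_filter] at hx
        exact ⟨x, mem_inter.mpr ⟨hx.1, by rw [hRdef, mem_filter]; exact ⟨mem_univ _, hx.2.2.2⟩⟩⟩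
    exact if_congr Iff.rfl rfl (if_congr (and_congr h1 h2) rfl rfl)
  rw [← hunion, Finset.sum_congr rfl hcongr, key_powerset EL ER hdisj]
  have hELne : EL.Nonempty ↔ ∃ i : Fin k, (i:ℕ) < s ∧ 1 ≤ e i := by
    simp only [Finset.Nonempty, hELdef, mem_filter, mem_univ, true_and]
    exact ⟨fun ⟨i, h⟩ => ⟨i, h.2, h.1⟩, fun ⟨i, h⟩ => ⟨i, h.2, h.1⟩⟩
  have hERne : ER.Nonempty ↔ ∃ i : Fin k, s ≤ (i:ℕ) ∧ 1 ≤ e i := by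
    simp only [Finset.Nonempty, hERdef, mem_filter, mem_univ, true_and]
    exact ⟨fun ⟨i, h⟩ => ⟨i, h.2, h.1⟩, fun ⟨i, h⟩ => ⟨i, h.2, h.1⟩⟩
  exact if_congr (and_congr hELne hERne) rfl rfl


theorem theta_eq_sum_divisors_lam (k s : ℕ) (hk : 3 ≤ k) (hs1 : 1 ≤ s) (hs2 : s ≤ k - 1)
    (n : Fin k → ℕ) (hn : ∀ i, 0 < n i) :
    (theta k s n : ℤ) =
      ∑ d ∈ Fintype.piFinset (fun i => (n i).divisors), lam k s d := by
  classical
  set N : ℕ := ∏ i, n i with hNdef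
  have hN : N ≠ 0 := Finset.prod_ne_zero_iff.mpr (fun i _ => (hn i).ne')
  set P : Finset ℕ := N.primeFactors with hPdef
  have hPprime : ∀ p ∈ P, Nat.Prime p := fun p hp => Nat.prime_of_mem_primeFactors hp
  have hnP : ∀ i : Fin k, (n i).primeFactors ⊆ P :=
    fun i => Nat.primeFactors_mono (Finset.dvd_prod_of_mem n (mem_univ i)) hN
  -- Step A: extend the product in `lam` to all of P
  have stepA : ∀ d ∈ Fintype.piFinset (fun i => (n i).divisors),
      lam k s d = ∏ p ∈ P, lamLocal k s (fun i => (d i).factorization p) := by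
    intro d hd
    rw [Fintype.mem_piFinset] at hd
    have hdvd : ∀ i, d i ∣ n i := fun i => (Nat.mem_divisors.mp (hd i)).1
    have hdne : ∀ i, d i ≠ 0 := fun i => ne_of_gt (Nat.pos_of_dvd_of_pos (hdvd i) (hn i))
    have hprod_dvd : (∏ i, d i) ∣ N :=
      Finset.prod_dvd_prod_of_dvd _ _ (fun i _ => hdvd i)
    have hDne : (∏ i, d i) ≠ 0 := Finset.prod_ne_zero_iff.mpr (fun i _ => hdne i)
    have hsub : (∏ i, d i).primeFactors ⊆ P := Nat.primeFactors_mono hprod_dvd hN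
    rw [lam]
    refine Finset.prod_subset hsub ?_
    intro p hp hnp
    have hpd : ¬ p ∣ ∏ i, d i := fun h =>
      hnp (Nat.mem_primeFactors.mpr ⟨hPprime p hp, h, hDne⟩)
    have hz : (fun i => (d i).factorization p) = fun _ => 0 := by
      funext i
      exact Nat.factorization_eq_zero_of_not_dvd
        (fun h => hpd (h.trans (Finset.dvd_prod_of_mem d (mem_univ i))))
    rw [hz]
    simp [lamLocal]
  rw [Finset.sum_congr rfl stepA]
  -- Step B: swap sum and product
  have stepB : (∑ d ∈ Fintype.piFinset (fun i => (n i).divisors),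
      ∏ p ∈ P, lamLocal k s (fun i => (d i).factorization p))
      = ∏ p ∈ P, ∑ ν ∈ Fintype.piFinset
          (fun i => Finset.range ((n i).factorization p + 1)), lamLocal k s ν := by
    rw [Finset.prod_sum]
    refine Finset.sum_nbij'
      (fun d => fun p (_ : p ∈ P) => (fun i => (d i).factorization p))
      (fun g => fun i => ∏ p ∈ P, p ^ (if h : p ∈ P then g p h i else 0)) ?_ ?_ ?_ ?_ ?_
    · intro d hd
      rw [Fintype.mem_piFinset] at hd
      have hdvd : ∀ i, d i ∣ n i := fun i => (Nat.mem_divisors.mp (hd i)).1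
      have hdne : ∀ i, d i ≠ 0 := fun i => ne_of_gt (Nat.pos_of_dvd_of_pos (hdvd i) (hn i))
      rw [Finset.mem_pi]
      intro p hp
      rw [Fintype.mem_piFinset]
      intro i
      rw [Finset.mem_range, Nat.lt_succ_iff]
      exact (Nat.factorization_le_iff_dvd (hdne i) (hn i).ne').mpr (hdvd i) p
    · intro g hg
      rw [Finset.mem_pi] at hg
      rw [Fintype.mem_piFinset]
      intro i
      rw [Nat.mem_divisors]
      refine ⟨?_, (hn i).ne'⟩
      conv_rhs => rw [← prod_pow_factorization_eq (hn i).ne' (hnP i)]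
      refine Finset.prod_dvd_prod_of_dvd _ _ (fun p hp => pow_dvd_pow p ?_)
      rw [dif_pos hp]
      have := hg p hp
      rw [Fintype.mem_piFinset] at this
      have := this i
      rw [Finset.mem_range] at this
      omega
    · intro d hd
      rw [Fintype.mem_piFinset] at hd
      have hdvd : ∀ i, d i ∣ n i := fun i => (Nat.mem_divisors.mp (hd i)).1
      have hdne : ∀ i, d i ≠ 0 := fun i => ne_of_gt (Nat.pos_of_dvd_of_pos (hdvd i) (hn i))
      funext i
      show (∏ p ∈ P, p ^ (if h : p ∈ P then (d i).factorization p else 0)) = d i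
      have h1 : ∀ p ∈ P, p ^ (if h : p ∈ P then (d i).factorization p else 0)
          = p ^ (d i).factorization p := fun p hp => by rw [dif_pos hp]
      rw [Finset.prod_congr rfl h1]
      exact prod_pow_factorization_eq (hdne i)
        ((Nat.primeFactors_mono (hdvd i) (hn i).ne').trans (hnP i))
    · intro g hg
      funext p hp i
      show (∏ q ∈ P, q ^ (if h : q ∈ P then g q h i else 0)).factorization p = g p hp i
      have h1 : ∀ q ∈ P, q ^ (if h : q ∈ P then g q h i else 0)
          = q ^ (fun q' => if h : q' ∈ P then g q' h i else 0) q := fun q hq => rfl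
      rw [Finset.prod_congr rfl h1,
        factorization_prod_pow hPprime (fun q' => if h : q' ∈ P then g q' h i else 0) hp,
        dif_pos hp]
    · intro d hd
      exact (Finset.prod_attach P
        (fun p => lamLocal k s (fun i => (d i).factorization p))).symm
  rw [stepB]
  rw [Finset.prod_congr rfl
    (fun p _ => local_sum k s (fun i => (n i).factorization p))]
  -- Step C: evaluate the product of indicators
  set A : ℕ := ∏ i ∈ Finset.univ.filter (fun i : Fin k => (i : ℕ) < s), n i with hAdef
  set B : ℕ := ∏ i ∈ Finset.univ.filter (fun i : Fin k => s ≤ (i : ℕ)), n i with hBdef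
  have hAB : A * B = N := by
    rw [hAdef, hBdef, hNdef]
    rw [show (Finset.univ.filter (fun i : Fin k => s ≤ (i : ℕ)))
        = Finset.univ.filter (fun i : Fin k => ¬ ((i : ℕ) < s)) from by
      apply Finset.filter_congr; intro i _; simp [not_lt]]
    exact Finset.prod_filter_mul_prod_filter_not _ _ _
  have hA0 : A ≠ 0 := Finset.prod_ne_zero_iff.mpr (fun i _ => (hn i).ne')
  have hB0 : B ≠ 0 := Finset.prod_ne_zero_iff.mpr (fun i _ => (hn i).ne')
  have hcondiff : ∀ p ∈ P,
      (((∃ i : Fin k, (i:ℕ) < s ∧ 1 ≤ (n i).factorization p) ∧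
        (∃ i : Fin k, s ≤ (i:ℕ) ∧ 1 ≤ (n i).factorization p)) ↔ (p ∣ A ∧ p ∣ B)) := by
    intro p hp
    have hprime := hPprime p hp
    have hdvdfac : ∀ i : Fin k, (p ∣ n i ↔ 1 ≤ (n i).factorization p) :=
      fun i => hprime.dvd_iff_one_le_factorization (hn i).ne'
    have hA : p ∣ A ↔ ∃ i : Fin k, (i:ℕ) < s ∧ 1 ≤ (n i).factorization p := by
      rw [hAdef, hprime.prime.dvd_finset_prod_iff]
      constructor
      · rintro ⟨i, hi, hdi⟩
        rw [mem_filter] at hi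
        exact ⟨i, hi.2, (hdvdfac i).mp hdi⟩
      · rintro ⟨i, hi, hdi⟩
        exact ⟨i, mem_filter.mpr ⟨mem_univ _, hi⟩, (hdvdfac i).mpr hdi⟩
    have hB : p ∣ B ↔ ∃ i : Fin k, s ≤ (i:ℕ) ∧ 1 ≤ (n i).factorization p := by
      rw [hBdef, hprime.prime.dvd_finset_prod_iff]
      constructor
      · rintro ⟨i, hi, hdi⟩
        rw [mem_filter] at hi
        exact ⟨i, hi.2, (hdvdfac i).mp hdi⟩
      · rintro ⟨i, hi, hdi⟩
        exact ⟨i, mem_filter.mpr ⟨mem_univ _, hi⟩, (hdvdfac i).mpr hdi⟩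
    rw [hA, hB]
  have hflip : ∀ p ∈ P,
      (if ((∃ i : Fin k, (i:ℕ) < s ∧ 1 ≤ (n i).factorization p) ∧
        (∃ i : Fin k, s ≤ (i:ℕ) ∧ 1 ≤ (n i).factorization p)) then (0:ℤ) else 1)
      = (if ¬ (p ∣ A ∧ p ∣ B) then (1:ℤ) else 0) := by
    intro p hp
    by_cases h : p ∣ A ∧ p ∣ B
    · rw [if_pos ((hcondiff p hp).mpr h), if_neg (not_not.mpr h)]
    · rw [if_neg (fun hc => h ((hcondiff p hp).mp hc)), if_pos h]
  rw [Finset.prod_congr rfl hflip, Finset.prod_boole]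
  have hiff : Nat.Coprime A B ↔ ∀ p ∈ P, ¬ (p ∣ A ∧ p ∣ B) := by
    constructor
    · intro hcop p hp ⟨h1, h2⟩
      have hd : p ∣ Nat.gcd A B := Nat.dvd_gcd h1 h2
      rw [Nat.Coprime] at hcop
      rw [hcop] at hd
      exact (hPprime p hp).ne_one (Nat.dvd_one.mp hd)
    · intro h
      by_contra hnc
      obtain ⟨p, hp, hpA, hpB⟩ := Nat.Prime.not_coprime_iff_dvd.mp hnc
      have hpN : p ∣ N := by
        rw [← hAB]
        exact hpA.trans (dvd_mul_right A B)
      exact h p (Nat.mem_primeFactors.mpr ⟨hp, hpN, hN⟩) ⟨hpA, hpB⟩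
  rw [theta]
  simp only [apply_ite (Nat.cast : ℕ → ℤ), Nat.cast_one, Nat.cast_zero]
  exact if_congr hiff rfl rfl
end

section
/- For all positive integers n_1,...,n_k (k ≥ 3, 2 ≤ t ≤ k), the indicator ϱ_{k,t}(n_1,...,n_k) of t-wise coprimality equals Σ_{d_1|n_1} ⋯ Σ_{d_k|n_k} ψ_{k,t}(d_1,...,d_k). -/
/-- ϱ_{k,t}: indicator that the components are t-wise relatively prime. -/
def rho (k t : ℕ) (x : Fin k → ℕ) : ℕ :=
  if ∀ S : Finset (Fin k), S.card = t → S.gcd x = 1 then 1 else 0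

/-- Local values of ψ_{k,t} on prime powers p^{ν_1},...,p^{ν_k}. -/
def psiLocal (k t : ℕ) (ν : Fin k → ℕ) : ℤ :=
  if ∀ i, ν i = 0 then 1
  else if (∀ i, ν i ≤ 1) ∧ t ≤ ∑ i, ν i then
    (-1) ^ (∑ i, ν i - t + 1) * ((∑ i, ν i - 1).choose (t - 1))
  else 0

/-- The multiplicative function ψ_{k,t} of k variables, built from its local values. -/
def psi (k t : ℕ) (x : Fin k → ℕ) : ℤ :=
  ∏ p ∈ (∏ i, x i).primeFactors, psiLocal k t (fun i => (x i).factorization p)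

/-!
Both sides factor over the primes dividing `n₁ ⋯ n_k`. At a prime `p` with exponent vector `E`,
only the 0/1-vectors below `E` contribute to the local sum of `ψ`, i.e. the subsets `S` of
`T = {i | p ∣ nᵢ}`, and a partial alternating binomial sum gives
`ψ(1_S) = ∑_{R ⊆ S, |R| < t} (-1)^(|S|+|R|)`. Möbius inversion on the subsets of `T` turns the
local sum into `[|T| < t]`, and `ϱ_{k,t}(n)` is the product of these indicators over `p`.
-/

open Finset

variable {k t : ℕ}

theorem psiLocal_eq_zero_of_one_lt {ν : Fin k → ℕ} {i : Fin k} (hi : 1 < ν i) :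
    psiLocal k t ν = 0 := by
  have : ¬ ∀ j, ν j = 0 := fun h => by simp [h i] at hi
  have : ¬ ∀ j, ν j ≤ 1 := fun h => by linarith [h i]
  simp [psiLocal, *]

theorem psiLocal_indicator (S : Finset (Fin k)) :
    psiLocal k t (fun i => if i ∈ S then 1 else 0) =
      if #S = 0 then 1
      else if t ≤ #S then (-1 : ℤ) ^ (#S - t + 1) * ((#S - 1).choose (t - 1)) else 0 := by
  have hsum : ∑ i, (if i ∈ S then 1 else 0) = #S := by simp
  have hzero : (∀ i, (if i ∈ S then 1 else 0) = 0) ↔ #S = 0 := by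
    simp [eq_empty_iff_forall_notMem]
  have hle : ∀ i, (if i ∈ S then 1 else 0) ≤ 1 := fun i => by split <;> omega
  rw [psiLocal, hsum, if_congr hzero rfl rfl, if_congr (and_iff_right hle) rfl rfl]

theorem sum_powerset_card_lt_neg_one_pow {α : Type*} (ht : 0 < t) (S : Finset α) :
    ∑ R ∈ S.powerset with #R < t, (-1 : ℤ) ^ (#S + #R) =
      if #S = 0 then 1
      else if t ≤ #S then (-1 : ℤ) ^ (#S - t + 1) * ((#S - 1).choose (t - 1)) else 0 := by
  rw [sum_filter, sum_powerset_apply_card (fun r => if r < t then (-1 : ℤ) ^ (#S + r) else 0)]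
  generalize #S = m
  obtain hmt | hmt := lt_or_ge m t
  · have hsum : ∑ r ∈ range (m + 1), m.choose r • (if r < t then (-1 : ℤ) ^ (m + r) else 0)
        = (-1) ^ m * ∑ r ∈ range (m + 1), (-1) ^ r * (m.choose r : ℤ) := by
      rw [mul_sum]
      refine sum_congr rfl fun r hr => ?_
      rw [if_pos (by simp at hr; omega), nsmul_eq_mul, pow_add]
      ring
    rw [if_neg (not_le.2 hmt), hsum, Int.alternating_sum_range_choose]
    split_ifs with h <;> simp [h]
  · obtain ⟨s, rfl⟩ : ∃ s, t = s + 1 := ⟨t - 1, by omega⟩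
    obtain ⟨d, rfl⟩ : ∃ d, m = s + d + 1 := ⟨m - (s + 1), by omega⟩
    have hfilter : {r ∈ range (s + d + 1 + 1) | r < s + 1} = range (s + 1) := by
      ext; simp; omega
    have hsum : ∑ r ∈ range (s + 1), (s + d + 1).choose r • (-1 : ℤ) ^ (s + d + 1 + r)
        = (-1) ^ (s + d + 1) *
            ∑ r ∈ range (s + 1), (-1) ^ r * ((s + d + 1).choose r : ℤ) := by
      rw [mul_sum]
      exact sum_congr rfl fun r _ => by rw [nsmul_eq_mul, pow_add]; ring
    have hsq : ((-1 : ℤ) ^ s) ^ 2 = 1 := by rw [← pow_mul, pow_mul', neg_one_sq, one_pow]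
    simp only [smul_ite, smul_zero, ← sum_filter, hfilter, if_neg (by omega : s + d + 1 ≠ 0),
      if_pos (by omega : s + 1 ≤ s + d + 1), show s + d + 1 - (s + 1) + 1 = d + 1 by omega,
      add_tsub_cancel_right]
    rw [hsum, Int.alternating_sum_range_choose_eq_choose]
    linear_combination ((-1 : ℤ) ^ (d + 1) * ((s + d).choose s : ℤ)) * hsq

theorem sum_powerset_superset_neg_one_pow {α : Type*} [DecidableEq α] {R T : Finset α}
    (hRT : R ⊆ T) :
    ∑ S ∈ T.powerset with R ⊆ S, (-1 : ℤ) ^ (#S + #R) = if R = T then 1 else 0 := by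
  have hIcc : {S ∈ T.powerset | R ⊆ S} = Icc R T := by ext; simp [and_comm]
  have hdisj : ∀ U ∈ (T \ R).powerset, Disjoint R U := fun U hU =>
    disjoint_of_subset_right (mem_powerset.1 hU) disjoint_sdiff
  rw [hIcc, Icc_eq_image_powerset hRT, sum_image fun U hU V hV h => by
    rw [← union_sdiff_cancel_left (hdisj U hU), h, union_sdiff_cancel_left (hdisj V hV)]]
  have hsign : ∀ U ∈ (T \ R).powerset, (-1 : ℤ) ^ (#(R ∪ U) + #R) = (-1) ^ #U :=
    fun U hU => by
      rw [card_union_of_disjoint (hdisj U hU), add_right_comm, ← two_mul, pow_add, pow_mul]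
      simp
  rw [sum_congr rfl hsign, sum_powerset_neg_one_pow_card]
  exact if_congr (sdiff_eq_empty_iff_subset.trans ⟨subset_antisymm hRT, ge_of_eq⟩) rfl rfl

theorem sum_powerset_psiLocal_indicator (ht : 0 < t) (T : Finset (Fin k)) :
    ∑ S ∈ T.powerset, psiLocal k t (fun i => if i ∈ S then 1 else 0) =
      if #T < t then 1 else 0 := calc
  _ = ∑ S ∈ T.powerset, ∑ R ∈ S.powerset with #R < t, (-1 : ℤ) ^ (#S + #R) :=
    sum_congr rfl fun S _ => by rw [psiLocal_indicator, sum_powerset_card_lt_neg_one_pow ht]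
  _ = ∑ R ∈ T.powerset with #R < t, ∑ S ∈ T.powerset with R ⊆ S, (-1 : ℤ) ^ (#S + #R) :=
    sum_comm' fun S R => by
      simp only [mem_filter, mem_powerset]
      exact ⟨fun ⟨hST, hRS, hR⟩ => ⟨⟨hST, hRS⟩, hRS.trans hST, hR⟩,
        fun ⟨⟨hST, hRS⟩, _, hR⟩ => ⟨hST, hRS, hR⟩⟩
  _ = ∑ R ∈ T.powerset with #R < t, if R = T then 1 else 0 :=
    sum_congr rfl fun R hR =>
      sum_powerset_superset_neg_one_pow (mem_powerset.1 (mem_filter.1 hR).1)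
  _ = if #T < t then 1 else 0 := by simp

theorem piFinset_range_filter_le_one {ι : Type*} [Fintype ι] [DecidableEq ι] (E : ι → ℕ) :
    {μ ∈ Fintype.piFinset (fun i => range (E i + 1)) | ∀ i, μ i ≤ 1} =
      ({i | E i ≠ 0} : Finset ι).powerset.image (fun S i => if i ∈ S then 1 else 0) := by
  ext μ
  simp only [mem_filter, Fintype.mem_piFinset, mem_range, mem_image, mem_powerset]
  constructor
  · rintro ⟨hμE, hμ⟩
    refine ⟨({i | μ i = 1} : Finset ι), fun i hi => ?_, funext fun i => ?_⟩
    · simp only [mem_filter, mem_univ, true_and] at hi ⊢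
      have := hμE i
      omega
    · have := hμ i
      simp only [mem_filter, mem_univ, true_and]
      split_ifs <;> omega
  · rintro ⟨S, hS, rfl⟩
    refine ⟨fun i => ?_, fun i => ?_⟩ <;> dsimp only <;> split_ifs with hi
    · have := hS hi
      simp only [mem_filter, mem_univ, true_and] at this
      omega
    all_goals omega

theorem sum_piFinset_range_psiLocal (ht : 0 < t) (E : Fin k → ℕ) :
    ∑ μ ∈ Fintype.piFinset (fun i => range (E i + 1)), psiLocal k t μ =
      if #{i | E i ≠ 0} < t then 1 else 0 := by
  have hinj : Set.InjOn (fun (S : Finset (Fin k)) i => if i ∈ S then 1 else 0)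
      ({i | E i ≠ 0} : Finset (Fin k)).powerset := fun S _ S' _ h => by
    ext i
    have := congrFun h i
    split_ifs at this <;> simp_all
  rw [← sum_powerset_psiLocal_indicator ht, ← sum_image hinj, ← piFinset_range_filter_le_one]
  convert (sum_filter_of_ne (p := fun μ : Fin k → ℕ => ∀ i, μ i ≤ 1)
    fun μ _ h i => not_lt.1 fun hi => h (psiLocal_eq_zero_of_one_lt hi)).symm

theorem Nat.prod_pow_factorization_of_primeFactors_subset {P : Finset ℕ} {a : ℕ} (ha : a ≠ 0)
    (hP : a.primeFactors ⊆ P) : ∏ p ∈ P, p ^ a.factorization p = a := by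
  refine (prod_subset hP fun p _ hp => ?_).symm.trans
    (Nat.prod_primeFactors_pow_factorization ha).symm
  rw [Finsupp.notMem_support_iff.1 (by rwa [Nat.support_factorization]), pow_zero]

theorem Nat.factorization_prod_pow_apply {ι : Type*} {s : Finset ι} {p : ι → ℕ}
    (hp : ∀ i ∈ s, (p i).Prime) (hinj : Set.InjOn p s) (e : ι → ℕ) {j : ι}
    (hj : j ∈ s) :
    (∏ i ∈ s, p i ^ e i).factorization (p j) = e j := by
  rw [Nat.factorization_prod fun i hi => pow_ne_zero _ (hp i hi).ne_zero, Finsupp.finsetSum_apply,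
    sum_eq_single_of_mem j hj fun i hi hij => ?_, (hp j hj).factorization_pow,
    Finsupp.single_eq_same]
  rw [(hp i hi).factorization_pow, Finsupp.single_eq_of_ne fun h => hij (hinj hi hj h.symm)]

theorem sum_piFinset_divisors_prod_factorization {ι R : Type*} [Fintype ι] [DecidableEq ι]
    [CommSemiring R] {P : Finset ℕ} (hP : ∀ p ∈ P, p.Prime) {n : ι → ℕ}
    (hn : ∀ i, n i ≠ 0) (hnP : ∀ i, (n i).primeFactors ⊆ P)
    (f : ℕ → (ι → ℕ) → R) :
    ∑ d ∈ Fintype.piFinset (fun i => (n i).divisors),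
        ∏ p ∈ P, f p (fun i => (d i).factorization p) =
      ∏ p ∈ P, ∑ μ ∈ Fintype.piFinset (fun i => range ((n i).factorization p + 1)),
        f p μ := by
  rw [← prod_coe_sort P, prod_univ_sum]
  refine sum_nbij' (fun d p i => (d i).factorization p) (fun g i => ∏ p : P, (p : ℕ) ^ g p i)
    ?_ ?_ ?_ ?_ fun d _ => (prod_coe_sort P _).symm
  · intro d hd
    simp only [Fintype.mem_piFinset, Nat.mem_divisors, mem_range, Nat.lt_succ_iff] at hd ⊢
    exact fun p i => (Nat.factorization_le_iff_dvd (ne_zero_of_dvd_ne_zero (hn i) (hd i).1)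
      (hn i)).2 (hd i).1 p
  · intro g hg
    simp only [Fintype.mem_piFinset, Nat.mem_divisors, mem_range, Nat.lt_succ_iff] at hg ⊢
    refine fun i => ⟨?_, hn i⟩
    calc ∏ p : P, (p : ℕ) ^ g p i ∣ ∏ p : P, (p : ℕ) ^ (n i).factorization p :=
          prod_dvd_prod_of_dvd _ _ fun p _ => pow_dvd_pow _ (hg p i)
      _ = n i := by rw [prod_coe_sort P (fun p => p ^ (n i).factorization p),
          Nat.prod_pow_factorization_of_primeFactors_subset (hn i) (hnP i)]
  · intro d hd
    simp only [Fintype.mem_piFinset, Nat.mem_divisors] at hd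
    funext i
    have hdi : d i ≠ 0 := ne_zero_of_dvd_ne_zero (hn i) (hd i).1
    rw [prod_coe_sort P (fun p => p ^ (d i).factorization p),
      Nat.prod_pow_factorization_of_primeFactors_subset hdi
        ((Nat.primeFactors_mono (hd i).1 (hn i)).trans (hnP i))]
  · intro g _
    funext q i
    exact Nat.factorization_prod_pow_apply (p := ((↑) : P → ℕ)) (fun p _ => hP p p.2)
      Subtype.val_injective.injOn (fun p => g p i) (mem_univ q)

theorem psi_eq_prod_psiLocal_of_primeFactors_subset {d : Fin k → ℕ} {P : Finset ℕ}
    (hd : ∏ i, d i ≠ 0) (hP : (∏ i, d i).primeFactors ⊆ P) :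
    psi k t d = ∏ p ∈ P, psiLocal k t (fun i => (d i).factorization p) := by
  refine prod_subset hP fun p _ hp => ?_
  have hzero : ∀ i, (d i).factorization p = 0 := fun i =>
    Finsupp.notMem_support_iff.1 fun h => hp <|
      Nat.primeFactors_mono (dvd_prod_of_mem d (mem_univ i)) hd (Nat.support_factorization _ ▸ h)
  simp [psiLocal, hzero]

theorem forall_gcd_eq_one_iff {ι : Type*} [Fintype ι] [DecidableEq ι] {n : ι → ℕ} :
    (∀ S : Finset ι, #S = t → S.gcd n = 1) ↔ ∀ p, p.Prime → #{i | p ∣ n i} < t := by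
  constructor
  · intro h p hp
    by_contra! hle
    obtain ⟨S, hS, hcard⟩ := exists_subset_card_eq hle
    have : p ∣ S.gcd n := dvd_gcd fun i hi => (mem_filter.1 (hS hi)).2
    exact hp.ne_one (Nat.dvd_one.1 (h S hcard ▸ this))
  · intro h S hcard
    by_contra hne
    obtain ⟨p, hp, hpS⟩ := Nat.exists_prime_and_dvd hne
    refine (h p hp).not_ge (hcard ▸ card_le_card fun i hi => ?_)
    exact mem_filter.2 ⟨mem_univ i, hpS.trans (gcd_dvd hi)⟩

theorem rho_eq_prod_primeFactors (ht : 0 < t) {n : Fin k → ℕ} (hn : ∏ i, n i ≠ 0) :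
    (rho k t n : ℤ) =
      ∏ p ∈ (∏ i, n i).primeFactors, if #{i | p ∣ n i} < t then 1 else 0 := by
  rw [prod_boole, rho, Nat.cast_ite, Nat.cast_one, Nat.cast_zero]
  refine if_congr (forall_gcd_eq_one_iff.trans ⟨fun h p hp => ?_, fun h p hp => ?_⟩) rfl rfl
  · exact h p (Nat.prime_of_mem_primeFactors hp)
  by_cases hpn : p ∣ ∏ i, n i
  · exact h p (Nat.mem_primeFactors.2 ⟨hp, hpn, hn⟩)
  · have : ({i | p ∣ n i} : Finset (Fin k)) = ∅ :=
      filter_eq_empty_iff.2 fun i _ hi => hpn (hi.trans (dvd_prod_of_mem n (mem_univ i)))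
    simpa [this] using ht

theorem rho_eq_sum_divisors_psi_general (k t : ℕ) (ht1 : 2 ≤ t)
    (n : Fin k → ℕ) (hn : ∀ i, 0 < n i) :
    (rho k t n : ℤ) =
      ∑ d ∈ Fintype.piFinset (fun i => (n i).divisors), psi k t d := by
  have ht : 0 < t := by omega
  have hN : ∏ i, n i ≠ 0 := prod_ne_zero_iff.2 fun i _ => (hn i).ne'
  have hlocal : ∀ p ∈ (∏ i, n i).primeFactors,
      (if #{i | p ∣ n i} < t then 1 else 0 : ℤ) =
        ∑ μ ∈ Fintype.piFinset (fun i => range ((n i).factorization p + 1)), psiLocal k t μ := by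
    intro p hp
    simp [sum_piFinset_range_psiLocal ht, Nat.factorization_eq_zero_iff,
      Nat.prime_of_mem_primeFactors hp, fun i => (hn i).ne']
  have hpsi : ∀ d ∈ Fintype.piFinset (fun i => (n i).divisors),
      psi k t d =
        ∏ p ∈ (∏ i, n i).primeFactors, psiLocal k t (fun i => (d i).factorization p) := by
    intro d hd
    have hdvd : ∏ i, d i ∣ ∏ i, n i :=
      prod_dvd_prod_of_dvd _ _ fun i _ => Nat.dvd_of_mem_divisors (Fintype.mem_piFinset.1 hd i)
    exact psi_eq_prod_psiLocal_of_primeFactors_subset (ne_zero_of_dvd_ne_zero hN hdvd)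
      (Nat.primeFactors_mono hdvd hN)
  rw [rho_eq_prod_primeFactors ht hN, prod_congr rfl hlocal, sum_congr rfl hpsi,
    sum_piFinset_divisors_prod_factorization (fun p hp => Nat.prime_of_mem_primeFactors hp)
      (fun i => (hn i).ne') fun i => Nat.primeFactors_mono (dvd_prod_of_mem n (mem_univ i)) hN]

theorem rho_eq_sum_divisors_psi (k t : ℕ) (hk : 3 ≤ k) (ht1 : 2 ≤ t) (ht2 : t ≤ k)
    (n : Fin k → ℕ) (hn : ∀ i, 0 < n i) :
    (rho k t n : ℤ) =
      ∑ d ∈ Fintype.piFinset (fun i => (n i).divisors), psi k t d :=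
  rho_eq_sum_divisors_psi_general k t ht1 n hn
end

section
/- Let k ≥ 3 and 2 ≤ t ≤ k. For x_1 = ⋯ = x_k = 1/p with p a prime, one has 1 - Σ_{j=t}^{k} (-1)^{j-t} C(j-1, t-1) e_j(1/p,...,1/p) = (p·G_{k,t}(p) + (-1)^{k-t+1}C(k-1,t-1)) / p^k, where e_j is the j-th elementary symmetric polynomial in k variables and G_{k,t}(x) = (1/x)(Σ_{j=0}^{t-1} C(k,j)(x-1)^{k-j} + (-1)^{k-t}C(k-1,t-1)). -/
/-- The j-th elementary symmetric polynomial in k variables, evaluated at x : Fin k → ℚ. -/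
def esym (k j : ℕ) (x : Fin k → ℚ) : ℚ :=
  ∑ S ∈ Finset.powersetCard j (Finset.univ : Finset (Fin k)), ∏ i ∈ S, x i

/-- G_{k,t}(x) = (1/x)(Σ_{j=0}^{t-1} C(k,j)(x-1)^{k-j} + (-1)^{k-t} C(k-1,t-1)). -/
def G (k t : ℕ) (x : ℚ) : ℚ :=
  (1 / x) * (∑ j ∈ Finset.range t, (k.choose j : ℚ) * (x - 1) ^ (k - j) +
    (-1) ^ (k - t) * ((k - 1).choose (t - 1) : ℚ))

/-!
With `y = 1/p`, the sum on the left is the inclusion–exclusion expression for the probability that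
at least `t` of `k` independent events of probability `y` occur, so it equals the binomial tail
`∑_{j ≥ t} C(k,j) y^j (1-y)^(k-j)`. This is proved by telescoping in `t`: by Pascal's rule and
`C(k,j) C(j,t) = C(k,t) C(k-t,j-t)`, consecutive differences of the inclusion–exclusion sums are
`C(k,t) y^t (1-y)^(k-t)`. Hence the left side is the complementary head
`∑_{j < t} C(k,j) (p-1)^(k-j) / p^k`, and `p G_{k,t}(p) + (-1)^(k-t+1) C(k-1,t-1)` is exactly that
numerator.
-/

open Finset

lemma esym_const (k j : ℕ) (c : ℚ) : esym k j (fun _ => c) = k.choose j * c ^ j := by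
  rw [esym, sum_congr rfl fun S hS => by rw [prod_const, (mem_powersetCard.mp hS).2], sum_const,
    card_powersetCard, card_univ, Fintype.card_fin, nsmul_eq_mul]

section Tail

variable {R : Type*} [CommRing R]

lemma sum_Icc_neg_one_pow_choose_mul_pow {t k : ℕ} (htk : t ≤ k) (y : R) :
    ∑ j ∈ Icc t k, (-1) ^ (j - t) * ((k - t).choose (j - t) : R) * y ^ j =
      y ^ t * (1 - y) ^ (k - t) := by
  rw [← Ico_add_one_right_eq_Icc, sum_Ico_eq_sum_range, show k + 1 - t = k - t + 1 by omega,
    sub_eq_neg_add, add_pow, mul_sum]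
  refine sum_congr rfl fun m _ => ?_
  rw [Nat.add_sub_cancel_left, neg_pow, one_pow, pow_add]
  ring

def inclusionExclusionTail (k t : ℕ) (y : R) : R :=
  ∑ j ∈ Icc t k, (-1) ^ (j - t) * ((j - 1).choose (t - 1) : R) * ((k.choose j : R) * y ^ j)

lemma inclusionExclusionTail_sub_succ {k t : ℕ} (ht : 1 ≤ t) (htk : t ≤ k) (y : R) :
    inclusionExclusionTail k t y - inclusionExclusionTail k (t + 1) y =
      k.choose t * y ^ t * (1 - y) ^ (k - t) := by
  have hsucc : inclusionExclusionTail k (t + 1) y =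
      -∑ j ∈ Icc t k, (-1) ^ (j - t) * ((j - 1).choose t : R) * ((k.choose j : R) * y ^ j) := by
    rw [← add_sum_Ioc_eq_sum_Icc htk, Nat.choose_eq_zero_of_lt (by omega : t - 1 < t),
      Nat.cast_zero, mul_zero, zero_mul, zero_add, inclusionExclusionTail, Icc_add_one_left_eq_Ioc,
      ← sum_neg_distrib]
    refine sum_congr rfl fun j hj => ?_
    rw [show j - t = j - (t + 1) + 1 by grind, pow_succ, Nat.add_sub_cancel]
    ring
  have hpascal : ∀ j ∈ Icc t k,
      (-1) ^ (j - t) * ((j - 1).choose (t - 1) : R) * ((k.choose j : R) * y ^ j) +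
        (-1) ^ (j - t) * ((j - 1).choose t : R) * ((k.choose j : R) * y ^ j) =
      k.choose t * ((-1) ^ (j - t) * ((k - t).choose (j - t) : R) * y ^ j) := by
    intro j hj
    have htj := (mem_Icc.mp hj).1
    have hchoose : (j - 1).choose (t - 1) + (j - 1).choose t = j.choose t := by
      obtain ⟨s, rfl⟩ := Nat.exists_eq_add_of_le' ht
      obtain ⟨i, rfl⟩ := Nat.exists_eq_add_of_le' (ht.trans htj)
      simp [Nat.choose_succ_succ']
    have hmul := congrArg (Nat.cast : ℕ → R) (Nat.choose_mul (n := k) htj)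
    push_cast at hmul
    rw [← add_mul, ← mul_add, ← Nat.cast_add, hchoose]
    linear_combination (-1) ^ (j - t) * y ^ j * hmul
  rw [hsucc, sub_neg_eq_add, inclusionExclusionTail, ← sum_add_distrib, sum_congr rfl hpascal,
    ← mul_sum, sum_Icc_neg_one_pow_choose_mul_pow htk, mul_assoc]

theorem inclusionExclusionTail_eq_sum {k t : ℕ} (ht : 1 ≤ t) (y : R) :
    inclusionExclusionTail k t y = ∑ j ∈ Icc t k, k.choose j * y ^ j * (1 - y) ^ (k - j) := by
  rcases le_or_gt t k with htk | hkt
  · have htop : inclusionExclusionTail k (k + 1) y = 0 := by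
      simp [inclusionExclusionTail]
    have := sum_Icc_sub htk fun s => inclusionExclusionTail k s y
    rw [htop, zero_sub] at this
    rw [← neg_neg (inclusionExclusionTail k t y), ← this, ← sum_neg_distrib]
    refine sum_congr rfl fun j hj => ?_
    rw [neg_sub, inclusionExclusionTail_sub_succ (ht.trans (mem_Icc.mp hj).1) (mem_Icc.mp hj).2]
  · simp [inclusionExclusionTail, Icc_eq_empty_of_lt hkt]

end Tail

lemma one_sub_inclusionExclusionTail_inv {K : Type*} [Field K] {k t : ℕ} (ht : 1 ≤ t)
    (htk : t ≤ k + 1) {x : K} (hx : x ≠ 0) :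
    1 - inclusionExclusionTail k t x⁻¹ =
      (∑ j ∈ range t, k.choose j * (x - 1) ^ (k - j)) / x ^ k := by
  have hterm : ∀ j ∈ range t,
      k.choose j * (x - 1) ^ (k - j) / x ^ k = k.choose j * x⁻¹ ^ j * (1 - x⁻¹) ^ (k - j) := by
    intro j hj
    obtain ⟨m, rfl⟩ := Nat.exists_eq_add_of_le (by grind : j ≤ k)
    rw [Nat.add_sub_cancel_left, pow_add, show 1 - x⁻¹ = (x - 1) / x by field_simp, div_pow, inv_pow]
    field_simp
  have hbinom : ∑ j ∈ range (k + 1), k.choose j * x⁻¹ ^ j * (1 - x⁻¹) ^ (k - j) = 1 :=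
    calc _ = (x⁻¹ + (1 - x⁻¹)) ^ k := by rw [add_pow]; exact sum_congr rfl fun j _ => by ring
      _ = 1 := by rw [add_sub_cancel, one_pow]
  have hsplit := sum_range_add_sum_Ico (fun j => k.choose j * x⁻¹ ^ j * (1 - x⁻¹) ^ (k - j)) htk
  rw [Ico_add_one_right_eq_Icc, hbinom] at hsplit
  rw [inclusionExclusionTail_eq_sum ht, sum_div, sum_congr rfl hterm]
  linear_combination -hsplit

theorem local_factor_eval_general (k t : ℕ) (ht1 : 2 ≤ t) (ht2 : t ≤ k)
    (p : ℕ) (hp : p.Prime) :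
    1 - ∑ j ∈ Finset.Icc t k, (-1 : ℚ) ^ (j - t) * ((j - 1).choose (t - 1) : ℚ) *
        esym k j (fun _ => 1 / (p : ℚ)) =
      ((p : ℚ) * G k t p + (-1) ^ (k - t + 1) * ((k - 1).choose (t - 1) : ℚ)) /
        (p : ℚ) ^ k := by
  have hp0 : (p : ℚ) ≠ 0 := mod_cast hp.ne_zero
  have hG : (p : ℚ) * G k t p + (-1) ^ (k - t + 1) * ((k - 1).choose (t - 1) : ℚ) =
      ∑ j ∈ range t, (k.choose j : ℚ) * (p - 1) ^ (k - j) := by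
    rw [G, pow_succ]
    field_simp
    ring
  simp_rw [esym_const, one_div]
  rw [hG]
  exact one_sub_inclusionExclusionTail_inv (by omega) (by omega) hp0

theorem local_factor_eval (k t : ℕ) (hk : 3 ≤ k) (ht1 : 2 ≤ t) (ht2 : t ≤ k)
    (p : ℕ) (hp : p.Prime) :
    1 - ∑ j ∈ Finset.Icc t k, (-1 : ℚ) ^ (j - t) * ((j - 1).choose (t - 1) : ℚ) *
        esym k j (fun _ => 1 / (p : ℚ)) =
      ((p : ℚ) * G k t p + (-1) ^ (k - t + 1) * ((k - 1).choose (t - 1) : ℚ)) /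
        (p : ℚ) ^ k :=
  local_factor_eval_general k t ht1 ht2 p hp
end

section
/- Let k ≥ 3 and 2 ≤ t ≤ k. The two expressions for G_{k,t}(x) agree as polynomials: (1/x)(Σ_{j=0}^{t-1} C(k,j)(x-1)^{k-j} + (-1)^{k-t}C(k-1,t-1)) = (1/x)(x^k - Σ_{j=t}^{k-1} (-1)^{j-t} C(k,j) C(j-1, t-1) x^{k-j}). -/
/-!
Both expressions equal `x ^ k` at `t = k`, and both drop by
`C(k,t) * ((-1)^(k-t) - (x-1)^(k-t))` when `t` is replaced by `t + 1`, so they agree for all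
`1 ≤ t ≤ k` by downward induction on `t`. For the first expression the step is Pascal's rule;
for the second, Pascal's rule merges consecutive terms into `(-1)^(j-t) C(k,j) C(j,t) x^(k-j)`,
and `C(k,j) C(j,t) = C(k,t) C(k-t,j-t)` identifies their sum with the binomial expansion of
`C(k,t) (x-1)^(k-t)`.
-/

open Finset

theorem cast_choose_sub_one_add {S : Type*} [AddMonoidWithOne S] {n k : ℕ} (hn : 1 ≤ n)
    (hk : 1 ≤ k) : ((n - 1).choose (k - 1) : S) + ((n - 1).choose k : S) = (n.choose k : S) := by
  obtain ⟨n, rfl⟩ := Nat.exists_eq_add_of_le hn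
  obtain ⟨k, rfl⟩ := Nat.exists_eq_add_of_le hk
  simp only [Nat.add_sub_cancel_left]
  rw [add_comm 1 n, add_comm 1 k, ← Nat.cast_add, ← Nat.choose_succ_succ']

section

variable {R : Type*} [CommRing R]

theorem choose_mul_sub_one_pow (x : R) {k t : ℕ} (htk : t ≤ k) :
    (k.choose t : R) * (x - 1) ^ (k - t) =
      ∑ j ∈ Icc t k, (-1) ^ (j - t) * (k.choose j : R) * (j.choose t : R) * x ^ (k - j) := by
  obtain ⟨n, rfl⟩ := Nat.exists_eq_add_of_le htk
  rw [← Ico_add_one_right_eq_Icc, sum_Ico_eq_sum_range, show x - 1 = -1 + x by ring, add_pow,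
    mul_sum, show t + n + 1 - t = n + 1 by omega, Nat.add_sub_cancel_left]
  refine sum_congr rfl fun i _ => ?_
  have hmul : ((t + n).choose (t + i) : R) * (t + i).choose t = (t + n).choose t * n.choose i := by
    rw [← Nat.cast_mul, Nat.choose_mul (Nat.le_add_right t i)]; simp
  rw [Nat.add_sub_cancel_left, show t + n - (t + i) = n - i by omega]
  linear_combination (-1 : R) ^ i * x ^ (n - i) * hmul.symm

def binomialForm (k t : ℕ) (x : R) : R :=
  ∑ j ∈ range t, (k.choose j : R) * (x - 1) ^ (k - j) +
    (-1) ^ (k - t) * ((k - 1).choose (t - 1) : R)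

def alternatingForm (k t : ℕ) (x : R) : R :=
  x ^ k - ∑ j ∈ Icc t (k - 1),
    (-1 : R) ^ (j - t) * (k.choose j : R) * ((j - 1).choose (t - 1) : R) * x ^ (k - j)

theorem binomialForm_self (k : ℕ) (x : R) : binomialForm k k x = x ^ k := by
  rw [binomialForm, Nat.sub_self, Nat.choose_self, show x = 1 + (x - 1) by ring, add_pow,
    sum_range_succ]
  simp [mul_comm]

theorem alternatingForm_self {k : ℕ} (hk : 1 ≤ k) (x : R) : alternatingForm k k x = x ^ k := by
  rw [alternatingForm, Icc_eq_empty (by omega), sum_empty, sub_zero]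

theorem binomialForm_sub_succ {k t : ℕ} (ht : 1 ≤ t) (htk : t < k) (x : R) :
    binomialForm k t x - binomialForm k (t + 1) x =
      k.choose t * ((-1) ^ (k - t) - (x - 1) ^ (k - t)) := by
  have hsign : (-1 : R) ^ (k - t) = -(-1) ^ (k - (t + 1)) := by
    rw [show k - t = k - (t + 1) + 1 by omega, pow_succ]; ring
  rw [binomialForm, binomialForm, sum_range_succ, Nat.add_sub_cancel,
    ← cast_choose_sub_one_add (by omega) ht]
  linear_combination -((k - 1).choose t : R) * hsign

theorem alternatingForm_sub_succ {k t : ℕ} (ht : 1 ≤ t) (htk : t < k) (x : R) :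
    alternatingForm k t x - alternatingForm k (t + 1) x =
      k.choose t * ((-1) ^ (k - t) - (x - 1) ^ (k - t)) := by
  obtain ⟨m, rfl⟩ := Nat.exists_eq_add_one_of_ne_zero (by omega : k ≠ 0)
  have hexpand := choose_mul_sub_one_pow x htk.le
  rw [sum_Icc_succ_top (by omega), ← add_sum_Ioc_eq_sum_Icc (by omega : t ≤ m),
    ← Icc_add_one_left_eq_Ioc] at hexpand
  have hpascal : ∀ j ∈ Icc (t + 1) m,
      (-1 : R) ^ (j - t) * ((m + 1).choose j : R) * ((j - 1).choose (t - 1) : R) *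
          x ^ (m + 1 - j) -
        (-1 : R) ^ (j - (t + 1)) * ((m + 1).choose j : R) * ((j - 1).choose (t + 1 - 1) : R) *
          x ^ (m + 1 - j) =
      (-1) ^ (j - t) * ((m + 1).choose j : R) * (j.choose t : R) * x ^ (m + 1 - j) := by
    intro j hj
    have hj : t + 1 ≤ j := (mem_Icc.mp hj).1
    rw [← cast_choose_sub_one_add (by omega) ht, Nat.add_sub_cancel,
      show j - t = j - (t + 1) + 1 by omega, pow_succ]
    ring
  rw [alternatingForm, alternatingForm, Nat.add_sub_cancel,
    ← add_sum_Ioc_eq_sum_Icc (by omega : t ≤ m), ← Icc_add_one_left_eq_Ioc]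
  have hsum := (sum_sub_distrib ..).symm.trans (sum_congr rfl hpascal)
  simp only [Nat.sub_self, pow_zero, Nat.choose_self, Nat.cast_one, one_mul, mul_one] at hexpand ⊢
  linear_combination hexpand - hsum

theorem binomialForm_eq_alternatingForm {k t : ℕ} (ht : 1 ≤ t) (htk : t ≤ k) (x : R) :
    binomialForm k t x = alternatingForm k t x := by
  induction htk using Nat.decreasingInduction with
  | self => rw [binomialForm_self, alternatingForm_self ht]
  | of_succ t htk ih =>
    have hstep := (binomialForm_sub_succ ht htk x).trans (alternatingForm_sub_succ ht htk x).symm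
    linear_combination hstep + ih (by omega)

end

theorem G_two_forms_agree_general (k t : ℕ) (ht1 : 2 ≤ t) (ht2 : t ≤ k)
    (x : ℚ) :
    (1 / x) * (∑ j ∈ Finset.range t, (k.choose j : ℚ) * (x - 1) ^ (k - j) +
        (-1) ^ (k - t) * ((k - 1).choose (t - 1) : ℚ)) =
      (1 / x) * (x ^ k - ∑ j ∈ Finset.Icc t (k - 1),
        (-1 : ℚ) ^ (j - t) * (k.choose j : ℚ) * ((j - 1).choose (t - 1) : ℚ) * x ^ (k - j)) :=
  congrArg (1 / x * ·) (binomialForm_eq_alternatingForm (by omega) ht2 x)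

theorem G_two_forms_agree (k t : ℕ) (hk : 3 ≤ k) (ht1 : 2 ≤ t) (ht2 : t ≤ k)
    (x : ℚ) (hx : x ≠ 0) :
    (1 / x) * (∑ j ∈ Finset.range t, (k.choose j : ℚ) * (x - 1) ^ (k - j) +
        (-1) ^ (k - t) * ((k - 1).choose (t - 1) : ℚ)) =
      (1 / x) * (x ^ k - ∑ j ∈ Finset.Icc t (k - 1),
        (-1 : ℚ) ^ (j - t) * (k.choose j : ℚ) * ((j - 1).choose (t - 1) : ℚ) * x ^ (k - j)) :=
  G_two_forms_agree_general k t ht1 ht2 x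
end
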